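/- For every strongly binary tree T and every positive integer B ≤ s(T), there exist at least 2^B pairwise distinct cuts y of T, each satisfying B ≤ K̃(T,y) ≤ 2B. -/
import Mathlib


/-- A strongly binary tree: either a single leaf, or an internal node with an
ordered pair of strongly binary subtrees. -/
inductive SBTree where
  | leaf : SBTree
  | node : SBTree → SBTree → SBTree
deriving DecidableEq

/-- The subtree of `T` sitting at the position described by the path `p`
(`false` = go to the left child, `true` = go to the right child), if it exists.
Positions `p` with `subtreeAt T p ≠ none` are the nodes of `T`; the root is `[]`,
and the parent of a nonroot node `p` is `p.dropLast`. -/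
def SBTree.subtreeAt : SBTree → List Bool → Option SBTree
  | t, [] => some t
  | .leaf, _ :: _ => none
  | .node l r, b :: p => (if b then r else l).subtreeAt p

/-- `p` is a node of `T`. -/
def SBTree.IsNodePos (T : SBTree) (p : List Bool) : Prop := (T.subtreeAt p).isSome

/-- `p` is a leaf of `T`. -/
def SBTree.IsLeafPos (T : SBTree) (p : List Bool) : Prop := T.subtreeAt p = some .leaf

/-- `p` is an internal node of `T`. -/
def SBTree.IsInternalPos (T : SBTree) (p : List Bool) : Prop :=
  ∃ l r, T.subtreeAt p = some (.node l r)

/-- A cut of `T`: an assignment `y` of `{0,1}` (here `Bool`) to the nodes of `T`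
(normalized to `false` outside the tree) such that every leaf is assigned `1` and,
whenever an internal node is assigned `1`, both of its children are assigned `1`. -/
def SBTree.IsCut (T : SBTree) (y : List Bool → Bool) : Prop :=
  (∀ p, ¬ T.IsNodePos p → y p = false) ∧
  (∀ p, T.IsLeafPos p → y p = true) ∧
  (∀ p, T.IsInternalPos p → y p = true →
    y (p ++ [false]) = true ∧ y (p ++ [true]) = true)

/-- The lower boundary `LB(y)` of a cut: the nodes `v` with `y v = 1` such that `v`
is the root or `y (parent v) = 0`; its cardinality is the number of clusters
induced by the cut. -/
def SBTree.LB (T : SBTree) (y : List Bool → Bool) : Set (List Bool) :=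
  {p | T.IsNodePos p ∧ y p = true ∧ (p = [] ∨ y p.dropLast = false)}

/-- The set `T'_y`: internal nodes `v` of `T` such that either `y v = 0`, or
`y v = 1` and (`v` is the root or `y (parent v) = 0`). -/
def SBTree.Tset (T : SBTree) (y : List Bool → Bool) : Set (List Bool) :=
  {p | T.IsInternalPos p ∧
    (y p = false ∨ (y p = true ∧ (p = [] ∨ y p.dropLast = false)))}

/-- `K̃(T,y)`: the number of nodes of `T'_y` having no child in `T'_y`. -/
noncomputable def SBTree.Ktilde (T : SBTree) (y : List Bool → Bool) : ℕ :=
  Set.ncard {p | p ∈ T.Tset y ∧ (p ++ [false]) ∉ T.Tset y ∧ (p ++ [true]) ∉ T.Tset y}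

/-- The number of cherries `s(T)`: internal nodes both of whose children are leaves
(equivalently, the number of pairs of sibling leaves `|L_s(T)|`). -/
def SBTree.cherries : SBTree → ℕ
  | .leaf => 0
  | .node .leaf .leaf => 1
  | .node l r => l.cherries + r.cherries

namespace SBTree

lemma subtreeAt_append (T : SBTree) (p q : List Bool) :
    T.subtreeAt (p ++ q) = (T.subtreeAt p).bind (·.subtreeAt q) := by
  induction p generalizing T with
  | nil => simp [subtreeAt]
  | cons b p ih =>
    cases T with
    | leaf => simp [subtreeAt]
    | node l r => simp [subtreeAt, ih]

lemma isNodePos_parent {T : SBTree} {p : List Bool} {b : Bool}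
    (h : T.IsNodePos (p ++ [b])) : T.IsInternalPos p := by
  rw [IsNodePos, subtreeAt_append] at h
  rcases ht : T.subtreeAt p with _ | t
  · rw [ht] at h; simp at h
  · rw [ht] at h
    cases t with
    | leaf => simp [subtreeAt] at h
    | node l r => exact ⟨l, r, ht⟩

lemma IsInternalPos.isNodePos {T : SBTree} {p : List Bool}
    (h : T.IsInternalPos p) : T.IsNodePos p := by
  obtain ⟨l, r, h⟩ := h; rw [IsNodePos, h]; rfl

lemma IsInternalPos.child {T : SBTree} {p : List Bool}
    (h : T.IsInternalPos p) (b : Bool) : T.IsNodePos (p ++ [b]) := by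
  obtain ⟨l, r, h⟩ := h
  rw [IsNodePos, subtreeAt_append, h]
  cases b <;> simp [subtreeAt]

end SBTree

namespace SBTree

/-- Combine cuts of the children into a cut of the whole tree, with root `0`. -/
def glue (f g : List Bool → Bool) : List Bool → Bool
  | [] => false
  | (b :: p) => if b then g p else f p

/-- The all-ones cut. -/
def allOnes (T : SBTree) (p : List Bool) : Bool := (T.subtreeAt p).isSome

@[simp] lemma glue_nil (f g : List Bool → Bool) : glue f g [] = false := rfl
@[simp] lemma glue_false (f g : List Bool → Bool) (p : List Bool) :
    glue f g (false :: p) = f p := rfl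
@[simp] lemma glue_true (f g : List Bool → Bool) (p : List Bool) :
    glue f g (true :: p) = g p := rfl

lemma isNodePos_node_cons {l r : SBTree} {b : Bool} {p : List Bool} :
    (SBTree.node l r).IsNodePos (b :: p) ↔ (if b then r else l).IsNodePos p := by
  cases b <;> rfl

lemma isLeafPos_node_cons {l r : SBTree} {b : Bool} {p : List Bool} :
    (SBTree.node l r).IsLeafPos (b :: p) ↔ (if b then r else l).IsLeafPos p := by
  cases b <;> rfl

lemma isInternalPos_node_cons {l r : SBTree} {b : Bool} {p : List Bool} :
    (SBTree.node l r).IsInternalPos (b :: p) ↔ (if b then r else l).IsInternalPos p := by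
  cases b <;> rfl

lemma isCut_glue {l r : SBTree} {f g : List Bool → Bool}
    (hf : l.IsCut f) (hg : r.IsCut g) : (SBTree.node l r).IsCut (glue f g) := by
  obtain ⟨hf0, hf1, hf2⟩ := hf
  obtain ⟨hg0, hg1, hg2⟩ := hg
  refine ⟨?_, ?_, ?_⟩
  · rintro (_ | ⟨b, p⟩) h
    · exact rfl
    · cases b
      · exact hf0 p (fun hp => h (isNodePos_node_cons.2 (by simpa using hp)))
      · exact hg0 p (fun hp => h (isNodePos_node_cons.2 (by simpa using hp)))
  · rintro (_ | ⟨b, p⟩) h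
    · simp [IsLeafPos, subtreeAt] at h
    · cases b
      · exact hf1 p (by simpa using isLeafPos_node_cons.1 h)
      · exact hg1 p (by simpa using isLeafPos_node_cons.1 h)
  · rintro (_ | ⟨b, p⟩) h hy
    · simp at hy
    · cases b
      · exact hf2 p (by simpa using isInternalPos_node_cons.1 h) (by simpa using hy)
      · exact hg2 p (by simpa using isInternalPos_node_cons.1 h) (by simpa using hy)

lemma isCut_allOnes (T : SBTree) : T.IsCut (allOnes T) := by
  refine ⟨?_, ?_, ?_⟩
  · intro p h
    simpa [allOnes, IsNodePos] using h
  · intro p h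
    simp [allOnes, h, IsLeafPos] at *
    rw [h]; rfl
  · intro p h _
    constructor <;>
      simpa [allOnes, IsNodePos] using h.child _

@[simp] lemma allOnes_nil (T : SBTree) : allOnes T [] = true := by simp [allOnes, subtreeAt]

lemma nodePos_finite (T : SBTree) : {p | T.IsNodePos p}.Finite := by
  induction T with
  | leaf =>
    apply Set.Finite.subset (Set.finite_singleton ([] : List Bool))
    rintro (_ | ⟨b, p⟩) h
    · simp
    · simp [IsNodePos, subtreeAt] at h
  | node l r ihl ihr =>
    apply Set.Finite.subset (((ihl.image (List.cons false)).union
      (ihr.image (List.cons true))).insert ([] : List Bool))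
    rintro (_ | ⟨b, p⟩) h
    · simp
    · cases b
      · exact Set.mem_insert_iff.2 (Or.inr (Or.inl ⟨p, by simpa using isNodePos_node_cons.1 h, rfl⟩))
      · exact Set.mem_insert_iff.2 (Or.inr (Or.inr ⟨p, by simpa using isNodePos_node_cons.1 h, rfl⟩))

end SBTree

namespace SBTree

/-- The set whose cardinality is `K̃`. -/
def KSet (T : SBTree) (y : List Bool → Bool) : Set (List Bool) :=
  {p | p ∈ T.Tset y ∧ (p ++ [false]) ∉ T.Tset y ∧ (p ++ [true]) ∉ T.Tset y}

lemma Ktilde_eq (T : SBTree) (y : List Bool → Bool) : T.Ktilde y = (T.KSet y).ncard := rfl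

lemma nil_mem_Tset {T : SBTree} {y : List Bool → Bool} :
    [] ∈ T.Tset y ↔ ∃ a b, T = SBTree.node a b := by
  cases hy : y [] <;> simp [Tset, IsInternalPos, subtreeAt, hy]

lemma Tset_leaf (y : List Bool → Bool) : SBTree.leaf.Tset y = ∅ := by
  ext p
  suffices h : ¬ SBTree.leaf.IsInternalPos p by simp [Tset, h]
  rintro ⟨a, b, hab⟩
  cases p with
  | nil => simp [subtreeAt] at hab
  | cons c q => simp [subtreeAt] at hab

lemma false_cons_mem_Tset_glue {l r : SBTree} {f g : List Bool → Bool} {q : List Bool} :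
    (false :: q) ∈ (SBTree.node l r).Tset (glue f g) ↔ q ∈ l.Tset f := by
  cases q with
  | nil =>
    cases hfb : f [] <;>
      simp [Tset, isInternalPos_node_cons, glue, hfb, List.dropLast]
  | cons b' q' =>
    have hd : (false :: b' :: q').dropLast = false :: (b' :: q').dropLast := rfl
    simp only [Tset, Set.mem_setOf_eq, isInternalPos_node_cons, if_neg Bool.false_ne_true, hd,
      glue_false]
    simp

lemma true_cons_mem_Tset_glue {l r : SBTree} {f g : List Bool → Bool} {q : List Bool} :
    (true :: q) ∈ (SBTree.node l r).Tset (glue f g) ↔ q ∈ r.Tset g := by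
  cases q with
  | nil =>
    cases hgb : g [] <;>
      simp [Tset, isInternalPos_node_cons, glue, hgb, List.dropLast]
  | cons b' q' =>
    have hd : (true :: b' :: q').dropLast = true :: (b' :: q').dropLast := rfl
    simp only [Tset, Set.mem_setOf_eq, isInternalPos_node_cons, if_pos rfl, hd, glue_true]
    simp

lemma nil_mem_Tset_glue {l r : SBTree} {f g : List Bool → Bool} :
    [] ∈ (SBTree.node l r).Tset (glue f g) := nil_mem_Tset.2 ⟨l, r, rfl⟩

lemma KSet_glue (l r : SBTree) (f g : List Bool → Bool) :
    (SBTree.node l r).KSet (glue f g) =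
      (if l = SBTree.leaf ∧ r = SBTree.leaf then {([] : List Bool)} else ∅) ∪
        (List.cons false '' l.KSet f) ∪ (List.cons true '' r.KSet g) := by
  ext p
  cases p with
  | nil =>
    have h1 : ([] : List Bool) ++ [false] = [false] := rfl
    have h2 : ([] : List Bool) ++ [true] = [true] := rfl
    have h3 : ([false] : List Bool) = false :: [] := rfl
    have h4 : ([true] : List Bool) = true :: [] := rfl
    simp only [KSet, Set.mem_setOf_eq, h1, h2, h3, h4, false_cons_mem_Tset_glue,
      true_cons_mem_Tset_glue, nil_mem_Tset, Set.mem_union, Set.mem_image]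
    constructor
    · rintro ⟨-, hl, hr⟩
      have hl' : l = SBTree.leaf := by
        cases l with
        | leaf => rfl
        | node a b => exact absurd ⟨a, b, rfl⟩ hl
      have hr' : r = SBTree.leaf := by
        cases r with
        | leaf => rfl
        | node a b => exact absurd ⟨a, b, rfl⟩ hr
      simp [hl', hr']
    · intro h
      rcases h with (h | ⟨q, _, hq⟩) | ⟨q, _, hq⟩
      · rcases Decidable.em (l = SBTree.leaf ∧ r = SBTree.leaf) with he | he
        · refine ⟨⟨l, r, rfl⟩, ?_, ?_⟩
          · rintro ⟨a, b, hab⟩; rw [he.1] at hab; exact SBTree.noConfusion hab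
          · rintro ⟨a, b, hab⟩; rw [he.2] at hab; exact SBTree.noConfusion hab
        · rw [if_neg he] at h; exact absurd h (Set.notMem_empty _)
      · exact absurd hq (List.cons_ne_nil _ _)
      · exact absurd hq (List.cons_ne_nil _ _)
  | cons b q =>
    have hmain : ∀ b' : Bool, (b :: q) ++ [b'] = b :: (q ++ [b']) := fun _ => rfl
    cases b
    · simp only [KSet, Set.mem_setOf_eq, hmain, false_cons_mem_Tset_glue, Set.mem_union,
        Set.mem_image]
      constructor
      · intro h
        exact Or.inl (Or.inr ⟨q, h, rfl⟩)
      · rintro ((h | ⟨q', hq', hq⟩) | ⟨q', hq', hq⟩)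
        · rcases Decidable.em (l = SBTree.leaf ∧ r = SBTree.leaf) with he | he
          · rw [if_pos he] at h; exact absurd h (List.cons_ne_nil _ _)
          · rw [if_neg he] at h; exact absurd h (Set.notMem_empty _)
        · obtain ⟨rfl⟩ : q' = q := by injection hq
          exact hq'
        · exact absurd hq (by simp)
    · simp only [KSet, Set.mem_setOf_eq, hmain, true_cons_mem_Tset_glue, Set.mem_union,
        Set.mem_image]
      constructor
      · intro h
        exact Or.inr ⟨q, h, rfl⟩
      · rintro ((h | ⟨q', hq', hq⟩) | ⟨q', hq', hq⟩)
        · rcases Decidable.em (l = SBTree.leaf ∧ r = SBTree.leaf) with he | he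
          · rw [if_pos he] at h; exact absurd h (List.cons_ne_nil _ _)
          · rw [if_neg he] at h; exact absurd h (Set.notMem_empty _)
        · exact absurd hq (by simp)
        · obtain ⟨rfl⟩ : q' = q := by injection hq
          exact hq'

end SBTree

namespace SBTree

lemma KSet_subset_nodePos (T : SBTree) (y : List Bool → Bool) :
    T.KSet y ⊆ {p | T.IsNodePos p} := by
  rintro p ⟨⟨hint, -⟩, -, -⟩
  exact hint.isNodePos

lemma KSet_finite (T : SBTree) (y : List Bool → Bool) : (T.KSet y).Finite :=
  (nodePos_finite T).subset (KSet_subset_nodePos T y)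

lemma Ktilde_glue (l r : SBTree) (f g : List Bool → Bool) :
    (SBTree.node l r).Ktilde (glue f g) =
      (if l = SBTree.leaf ∧ r = SBTree.leaf then 1 else 0) + l.Ktilde f + r.Ktilde g := by
  rw [Ktilde_eq, KSet_glue]
  have hinj : ∀ b : Bool, Function.Injective (List.cons b) := fun b p q h => by injection h
  have hfin0 : (if l = SBTree.leaf ∧ r = SBTree.leaf then {([] : List Bool)} else
      (∅ : Set (List Bool))).Finite := by
    split <;> simp
  have hfinF : (List.cons false '' l.KSet f).Finite := (KSet_finite l f).image _
  have hfinT : (List.cons true '' r.KSet g).Finite := (KSet_finite r g).image _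
  have hd1 : Disjoint (if l = SBTree.leaf ∧ r = SBTree.leaf then {([] : List Bool)} else
      (∅ : Set (List Bool))) (List.cons false '' l.KSet f ∪ List.cons true '' r.KSet g) := by
    rw [Set.disjoint_left]
    intro p hp hq
    have hpnil : p = [] := by
      split at hp
      · simpa using hp
      · simp at hp
    rcases hq with ⟨q, -, hq⟩ | ⟨q, -, hq⟩ <;> rw [hpnil] at hq <;>
      exact absurd hq (List.cons_ne_nil _ _)
  have hd2 : Disjoint (List.cons false '' l.KSet f) (List.cons true '' r.KSet g) := by
    rw [Set.disjoint_left]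
    rintro p ⟨q, -, rfl⟩ ⟨q', -, hq'⟩
    exact Bool.false_ne_true (by injection hq'.symm)
  rw [Set.union_assoc, Set.ncard_union_eq hd1 hfin0 (hfinF.union hfinT),
    Set.ncard_union_eq hd2 hfinF hfinT,
    Set.ncard_image_of_injective _ (hinj false), Set.ncard_image_of_injective _ (hinj true)]
  have h0 : (if l = SBTree.leaf ∧ r = SBTree.leaf then {([] : List Bool)} else
      (∅ : Set (List Bool))).ncard = if l = SBTree.leaf ∧ r = SBTree.leaf then 1 else 0 := by
    split <;> simp
  rw [h0, ← Ktilde_eq, ← Ktilde_eq]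
  ring

lemma Ktilde_leaf (y : List Bool → Bool) : SBTree.leaf.Ktilde y = 0 := by
  rw [Ktilde_eq]
  have : SBTree.leaf.KSet y = ∅ := by
    rw [KSet, Tset_leaf]
    simp
  rw [this, Set.ncard_empty]

lemma Tset_allOnes_node (l r : SBTree) :
    (SBTree.node l r).Tset (allOnes (SBTree.node l r)) = {[]} := by
  ext p
  constructor
  · rintro ⟨hint, hcond⟩
    have hnode := hint.isNodePos
    have hy : allOnes (SBTree.node l r) p = true := by
      rw [allOnes]
      rwa [IsNodePos] at hnode
    rcases List.eq_nil_or_concat p with rfl | ⟨q, b, rfl⟩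
    · rfl
    · exfalso
      simp only [List.concat_eq_append] at hnode hcond hy
      have hq : (SBTree.node l r).IsNodePos q := (isNodePos_parent hnode).isNodePos
      have hyq : allOnes (SBTree.node l r) q = true := by
        rw [allOnes]; rwa [IsNodePos] at hq
      rw [List.dropLast_concat] at hcond
      rcases hcond with h | ⟨_, h | h⟩
      · rw [hy] at h; exact absurd h (by simp)
      · exact absurd h (by simp)
      · rw [hyq] at h; exact absurd h (by simp)
  · rintro rfl
    exact ⟨⟨l, r, rfl⟩, Or.inr ⟨rfl, Or.inl rfl⟩⟩

lemma Ktilde_allOnes_node (l r : SBTree) :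
    (SBTree.node l r).Ktilde (allOnes (SBTree.node l r)) = 1 := by
  rw [Ktilde_eq]
  have : (SBTree.node l r).KSet (allOnes (SBTree.node l r)) = {[]} := by
    rw [KSet, Tset_allOnes_node]
    ext p
    simp only [Set.mem_setOf_eq, Set.mem_singleton_iff]
    constructor
    · rintro ⟨h, -, -⟩; exact h
    · rintro rfl
      exact ⟨rfl, by simp, by simp⟩
  rw [this, Set.ncard_singleton]

lemma cherries_node (l r : SBTree) :
    (SBTree.node l r).cherries =
      (if l = SBTree.leaf ∧ r = SBTree.leaf then 1 else 0) + l.cherries + r.cherries := by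
  cases l <;> cases r <;> simp [cherries]

lemma one_le_cherries {T : SBTree} (h : T ≠ SBTree.leaf) : 1 ≤ T.cherries := by
  induction T with
  | leaf => exact absurd rfl h
  | node l r ihl ihr =>
    rw [cherries_node]
    rcases Decidable.em (l = SBTree.leaf ∧ r = SBTree.leaf) with he | he
    · simp [he, cherries]
    · rw [if_neg he]
      rcases Decidable.not_and_iff_or_not.mp he with hl | hr
      · have := ihl hl; omega
      · have := ihr hr; omega

lemma glue_injective :
    Function.Injective (fun fg : (List Bool → Bool) × (List Bool → Bool) => glue fg.1 fg.2) := by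
  rintro ⟨f, g⟩ ⟨f', g'⟩ h
  simp only [Prod.mk.injEq]
  constructor
  · funext p; exact congrFun h (false :: p)
  · funext p; exact congrFun h (true :: p)

end SBTree

namespace SBTree

lemma glue_right_inj (f : List Bool → Bool) : Function.Injective (fun g => glue f g) := by
  intro g g' h
  exact congrArg Prod.snd (glue_injective (a₁ := (f, g)) (a₂ := (f, g')) h)

lemma glue_left_inj (g : List Bool → Bool) : Function.Injective (fun f => glue f g) := by
  intro f f' h
  exact congrArg Prod.fst (glue_injective (a₁ := (f, g)) (a₂ := (f', g)) h)

end SBTree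

/-- Lower-bound construction (Theorem 2): for every strongly binary tree `T` and
every positive integer `B ≤ s(T)`, there exist at least `2^B` pairwise distinct
cuts `y` of `T`, each satisfying `B ≤ K̃(T,y) ≤ 2B`. -/
theorem exists_two_pow_cuts (T : SBTree) (B : ℕ) (hB : 1 ≤ B)
    (hBs : B ≤ T.cherries) :
    ∃ Y : Finset (List Bool → Bool), 2 ^ B ≤ Y.card ∧
      ∀ y ∈ Y, T.IsCut y ∧ B ≤ T.Ktilde y ∧ T.Ktilde y ≤ 2 * B := by
  classical
  revert B
  induction T with
  | leaf =>
    intro B hB hBs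
    simp [SBTree.cherries] at hBs
    omega
  | node l r ihl ihr =>
    intro B hB hBs
    rcases Nat.lt_or_ge B 2 with hB2 | hB2
    · have hB1 : B = 1 := by omega
      subst hB1
      refine ⟨{SBTree.allOnes (SBTree.node l r),
        SBTree.glue (SBTree.allOnes l) (SBTree.allOnes r)}, ?_, ?_⟩
      · have hne : SBTree.allOnes (SBTree.node l r) ≠
            SBTree.glue (SBTree.allOnes l) (SBTree.allOnes r) := by
          intro h
          have h' := congrFun h []
          simp at h'
        rw [Finset.card_insert_of_notMem (by simpa using hne), Finset.card_singleton]
        norm_num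
      · intro y hy
        rcases Finset.mem_insert.mp hy with rfl | hy
        · refine ⟨SBTree.isCut_allOnes _, ?_, ?_⟩ <;>
            rw [SBTree.Ktilde_allOnes_node] <;> omega
        · rw [Finset.mem_singleton] at hy
          subst hy
          refine ⟨SBTree.isCut_glue (SBTree.isCut_allOnes l) (SBTree.isCut_allOnes r), ?_⟩
          rw [SBTree.Ktilde_glue]
          cases l <;> cases r <;>
            simp [SBTree.Ktilde_leaf, SBTree.Ktilde_allOnes_node] <;> omega
    · have hnotcherry : ¬ (l = SBTree.leaf ∧ r = SBTree.leaf) := by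
        rintro ⟨rfl, rfl⟩
        simp [SBTree.cherries] at hBs
        omega
      have hsum : (SBTree.node l r).cherries = l.cherries + r.cherries :=
        by rw [SBTree.cherries_node, if_neg hnotcherry]; omega
      rw [hsum] at hBs
      rcases eq_or_ne l SBTree.leaf with rfl | hl
      · have hrb : B ≤ r.cherries := by simpa [SBTree.cherries] using hBs
        have hrleaf : r ≠ SBTree.leaf := by
          rintro rfl
          simp [SBTree.cherries] at hrb
          omega
        obtain ⟨Yr, hcard, hmem⟩ := ihr B hB hrb
        refine ⟨Yr.image (fun g => SBTree.glue (SBTree.allOnes SBTree.leaf) g), ?_, ?_⟩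
        · rw [Finset.card_image_of_injective _ (SBTree.glue_right_inj _)]
          exact hcard
        · intro y hy
          obtain ⟨g, hg, rfl⟩ := Finset.mem_image.mp hy
          obtain ⟨hcg, hg1, hg2⟩ := hmem g hg
          refine ⟨SBTree.isCut_glue (SBTree.isCut_allOnes _) hcg, ?_, ?_⟩ <;>
            rw [SBTree.Ktilde_glue, if_neg hnotcherry, SBTree.Ktilde_leaf] <;> omega
      · rcases eq_or_ne r SBTree.leaf with rfl | hr
        · have hlb : B ≤ l.cherries := by simpa [SBTree.cherries] using hBs
          obtain ⟨Yl, hcard, hmem⟩ := ihl B hB hlb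
          refine ⟨Yl.image (fun f => SBTree.glue f (SBTree.allOnes SBTree.leaf)), ?_, ?_⟩
          · rw [Finset.card_image_of_injective _ (SBTree.glue_left_inj _)]
            exact hcard
          · intro y hy
            obtain ⟨f, hf, rfl⟩ := Finset.mem_image.mp hy
            obtain ⟨hcf, hf1, hf2⟩ := hmem f hf
            refine ⟨SBTree.isCut_glue hcf (SBTree.isCut_allOnes _), ?_, ?_⟩ <;>
              rw [SBTree.Ktilde_glue, if_neg hnotcherry, SBTree.Ktilde_leaf] <;> omega
        · have hcl := SBTree.one_le_cherries hl
          have hcr := SBTree.one_le_cherries hr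
          have h1 : 1 ≤ min (B - 1) l.cherries := le_min (by omega) hcl
          have h2 : min (B - 1) l.cherries ≤ l.cherries := min_le_right _ _
          have h3 : 1 ≤ B - min (B - 1) l.cherries := by omega
          have h4 : B - min (B - 1) l.cherries ≤ r.cherries := by omega
          obtain ⟨Yl, hcardl, hmeml⟩ := ihl _ h1 h2
          obtain ⟨Yr, hcardr, hmemr⟩ := ihr _ h3 h4
          refine ⟨(Yl ×ˢ Yr).image (fun fg => SBTree.glue fg.1 fg.2), ?_, ?_⟩
          · rw [Finset.card_image_of_injective _ SBTree.glue_injective, Finset.card_product]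
            calc 2 ^ B = 2 ^ (min (B - 1) l.cherries) * 2 ^ (B - min (B - 1) l.cherries) := by
                  rw [← pow_add]
                  congr 1
                  omega
            _ ≤ Yl.card * Yr.card := Nat.mul_le_mul hcardl hcardr
          · intro y hy
            simp only [Finset.mem_image, Finset.mem_product] at hy
            obtain ⟨⟨f, g⟩, ⟨hf, hg⟩, rfl⟩ := hy
            dsimp only
            obtain ⟨hcf, hf1, hf2⟩ := hmeml f hf
            obtain ⟨hcg, hg1, hg2⟩ := hmemr g hg
            refine ⟨SBTree.isCut_glue hcf hcg, ?_, ?_⟩ <;>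
              rw [SBTree.Ktilde_glue, if_neg hnotcherry] <;> omega
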